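/- Grazing-angle integral bound for a circle (Lemma 5.4). Let 0 < R < a, set x := (a, 0) ∈ ℝ² and α := arcsin(R/a) ∈ (0, π/2). For u_θ ∈ (0, α] and u := (cos u_θ, sin u_θ), the set {τ > 0 : |x − τu| = R} is nonempty; let t_b(x,u;R) be its infimum and x_b(x,u;R) := x − t_b(x,u;R) u. Then x_b(x,u;R) · u = √(R² − a² sin² u_θ), and ∫_{α/2}^{α} 1/(x_b(x,u;R) · u) du_θ ≤ (1/R) ln(1 + 2R/(a − R)). -/

import Mathlib

/-!
The ray from `x = (a, 0)` in direction `-u` meets the circle exactly where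
`(τ - a cos θ)² = R² - a² sin² θ`; the nearer root is `t_b`, whence
`x_b · u = √(R² - a² sin² θ)`. On `[α/2, α]` we have `sin θ ≥ sin (α/2)`, so the integrand
is dominated by `sin θ / (sin (α/2) √(R² - a² sin² θ))`, whose antiderivative is
`-log (a cos θ + √(R² - a² sin² θ)) / (a sin (α/2))`. At `θ = α` the square root vanishes and
`a cos α = √(a² - R²)`; together with `a sin (α/2) ≥ a sin α / 2 = R / 2` and
`a cos (α/2) + √(R² - a² sin² (α/2)) ≤ a + R` this gives `(1/R) log ((a + R)/(a - R))`.
-/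

open MeasureTheory
open scoped RealInnerProductSpace

noncomputable section

abbrev E2 : Type := EuclideanSpace ℝ (Fin 2)

/-- The point of `ℝ²` with coordinates `(p, q)`. -/
def vec2 (p q : ℝ) : E2 := (WithLp.equiv 2 (Fin 2 → ℝ)).symm ![p, q]

/-- Backward exit time `t_b(x, u; R)` for `x = (a,0)` and `u = (cos θ, sin θ)` on the
circle of radius `R` centered at the origin. -/
def tbCir (a R θ : ℝ) : ℝ :=
  sInf {τ : ℝ | 0 < τ ∧ ‖vec2 a 0 - τ • vec2 (Real.cos θ) (Real.sin θ)‖ = R}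

/-- Backward exit position `x_b(x, u; R) = x − t_b(x,u;R) u`. -/
def xbCir (a R θ : ℝ) : E2 :=
  vec2 a 0 - tbCir a R θ • vec2 (Real.cos θ) (Real.sin θ)

open Real Set intervalIntegral

lemma vec2_sub_smul (a τ p q : ℝ) :
    vec2 a 0 - τ • vec2 p q = vec2 (a - τ * p) (-(τ * q)) := by
  ext i; fin_cases i <;> simp [vec2]

lemma norm_vec2 (p q : ℝ) : ‖vec2 p q‖ = √(p ^ 2 + q ^ 2) := by
  simp [EuclideanSpace.norm_eq, vec2, Fin.sum_univ_two]

lemma inner_vec2 (p q r s : ℝ) : ⟪vec2 p q, vec2 r s⟫ = p * r + q * s := by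
  simp [vec2, PiLp.inner_apply, Fin.sum_univ_two]; ring

lemma norm_sub_smul_eq_iff {a R θ τ : ℝ} (hR : 0 ≤ R) :
    ‖vec2 a 0 - τ • vec2 (cos θ) (sin θ)‖ = R ↔
      (τ - a * cos θ) ^ 2 = R ^ 2 - a ^ 2 * sin θ ^ 2 := by
  have hsq : (a - τ * cos θ) ^ 2 + (-(τ * sin θ)) ^ 2 =
      (τ - a * cos θ) ^ 2 + a ^ 2 * sin θ ^ 2 := by
    linear_combination (τ ^ 2 - a ^ 2) * sin_sq_add_cos_sq θ
  rw [vec2_sub_smul, norm_vec2, hsq, sqrt_eq_iff_eq_sq (by positivity) hR]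
  constructor <;> intro h <;> linarith

section Chord

variable {a R θ : ℝ}

lemma hittingSet_eq_pair (hR : 0 ≤ R) (hRa : R < a) (hcos : 0 < cos θ)
    (hsin : a ^ 2 * sin θ ^ 2 ≤ R ^ 2) :
    {τ : ℝ | 0 < τ ∧ ‖vec2 a 0 - τ • vec2 (cos θ) (sin θ)‖ = R} =
      {a * cos θ - √(R ^ 2 - a ^ 2 * sin θ ^ 2),
        a * cos θ + √(R ^ 2 - a ^ 2 * sin θ ^ 2)} := by
  set D := R ^ 2 - a ^ 2 * sin θ ^ 2
  have hD : √D ^ 2 = D := sq_sqrt (by linarith)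
  -- Both roots are positive: `D < (a cos θ)²` because `R < a`.
  have hroot : √D < a * cos θ := by
    rw [sqrt_lt' (by nlinarith)]
    nlinarith [sin_sq_add_cos_sq θ]
  ext τ
  simp only [mem_ofPred_eq, mem_insert_iff, mem_singleton_iff, norm_sub_smul_eq_iff hR]
  constructor
  · rintro ⟨-, h⟩
    have : (τ - a * cos θ - √D) * (τ - a * cos θ + √D) = 0 := by linear_combination h - hD
    rcases mul_eq_zero.1 this with h' | h'
    · right; linarith
    · left; linarith
  · rintro (rfl | rfl)
    · exact ⟨by linarith, by linear_combination hD⟩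
    · exact ⟨by linarith [sqrt_nonneg D], by linear_combination hD⟩

lemma tbCir_eq (hR : 0 ≤ R) (hRa : R < a) (hcos : 0 < cos θ)
    (hsin : a ^ 2 * sin θ ^ 2 ≤ R ^ 2) :
    tbCir a R θ = a * cos θ - √(R ^ 2 - a ^ 2 * sin θ ^ 2) := by
  rw [tbCir, hittingSet_eq_pair hR hRa hcos hsin, csInf_pair]
  exact min_eq_left (by linarith [sqrt_nonneg (R ^ 2 - a ^ 2 * sin θ ^ 2)])

lemma inner_xbCir_eq (hR : 0 ≤ R) (hRa : R < a) (hcos : 0 < cos θ)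
    (hsin : a ^ 2 * sin θ ^ 2 ≤ R ^ 2) :
    ⟪xbCir a R θ, vec2 (cos θ) (sin θ)⟫ = √(R ^ 2 - a ^ 2 * sin θ ^ 2) := by
  rw [xbCir, inner_sub_left, real_inner_smul_left, inner_vec2, inner_vec2,
    tbCir_eq hR hRa hcos hsin]
  linear_combination (√(R ^ 2 - a ^ 2 * sin θ ^ 2) - a * cos θ) * sin_sq_add_cos_sq θ

end Chord

section GrazingCone

variable {a R θ : ℝ}

lemma arcsin_div_lt_pi_div_two (ha : 0 < a) (hRa : R < a) : arcsin (R / a) < π / 2 :=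
  arcsin_lt_pi_div_two.2 ((div_lt_one ha).2 hRa)

lemma cos_pos_of_le_arcsin (ha : 0 < a) (hRa : R < a) (h0 : 0 ≤ θ)
    (hθ : θ ≤ arcsin (R / a)) : 0 < cos θ :=
  cos_pos_of_mem_Ioo ⟨by linarith [pi_pos], hθ.trans_lt (arcsin_div_lt_pi_div_two ha hRa)⟩

lemma sin_nonneg_of_le_arcsin {x : ℝ} (h0 : 0 ≤ θ) (hθ : θ ≤ arcsin x) : 0 ≤ sin θ :=
  sin_nonneg_of_nonneg_of_le_pi h0 (by linarith [arcsin_le_pi_div_two x, pi_pos])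

lemma mul_sin_le_of_le_arcsin (ha : 0 < a) (h0 : 0 ≤ θ) (hθ : θ ≤ arcsin (R / a)) :
    a * sin θ ≤ R := by
  have hsin := (le_arcsin_iff_sin_le'
    ⟨by linarith [pi_pos], hθ.trans (arcsin_le_pi_div_two _)⟩).1 hθ
  rwa [le_div_iff₀ ha, mul_comm] at hsin

lemma mul_sin_lt_of_lt_arcsin (ha : 0 < a) (h0 : 0 ≤ θ) (hθ : θ < arcsin (R / a)) :
    a * sin θ < R := by
  have hsin := (lt_arcsin_iff_sin_lt'
    ⟨by linarith [pi_pos], hθ.trans_le (arcsin_le_pi_div_two _)⟩).1 hθ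
  rwa [lt_div_iff₀ ha, mul_comm] at hsin

lemma sq_mul_sin_sq_le_of_le_arcsin (ha : 0 < a) (h0 : 0 ≤ θ) (hθ : θ ≤ arcsin (R / a)) :
    a ^ 2 * sin θ ^ 2 ≤ R ^ 2 := by
  nlinarith [mul_sin_le_of_le_arcsin ha h0 hθ, mul_nonneg ha.le (sin_nonneg_of_le_arcsin h0 hθ)]

lemma sq_mul_sin_sq_lt_of_lt_arcsin (ha : 0 < a) (h0 : 0 ≤ θ) (hθ : θ < arcsin (R / a)) :
    a ^ 2 * sin θ ^ 2 < R ^ 2 := by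
  nlinarith [mul_sin_lt_of_lt_arcsin ha h0 hθ,
    mul_nonneg ha.le (sin_nonneg_of_le_arcsin h0 hθ.le)]

lemma mul_cos_arcsin_div (ha : 0 < a) : a * cos (arcsin (R / a)) = √(a ^ 2 - R ^ 2) := by
  rw [cos_arcsin, ← sqrt_sq ha.le, ← sqrt_mul (sq_nonneg a), sqrt_sq ha.le]
  congr 1
  field_simp

end GrazingCone

lemma hasDerivAt_log_mul_cos_add_sqrt {a R θ : ℝ} (hD : 0 < R ^ 2 - a ^ 2 * sin θ ^ 2)
    (hne : a * cos θ + √(R ^ 2 - a ^ 2 * sin θ ^ 2) ≠ 0) :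
    HasDerivAt (fun t => log (a * cos t + √(R ^ 2 - a ^ 2 * sin t ^ 2)))
      (-(a * (sin θ / √(R ^ 2 - a ^ 2 * sin θ ^ 2)))) θ := by
  have hsqrt : HasDerivAt (fun t => √(R ^ 2 - a ^ 2 * sin t ^ 2))
      (-(a ^ 2 * (2 * sin θ * cos θ)) / (2 * √(R ^ 2 - a ^ 2 * sin θ ^ 2))) θ := by
    have := (((hasDerivAt_sin θ).pow 2).const_mul (a ^ 2)).const_sub (R ^ 2)
    simpa using this.sqrt hD.ne'
  have hsum : HasDerivAt (fun t => a * cos t + √(R ^ 2 - a ^ 2 * sin t ^ 2))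
      (a * -sin θ + -(a ^ 2 * (2 * sin θ * cos θ)) / (2 * √(R ^ 2 - a ^ 2 * sin θ ^ 2))) θ :=
    ((hasDerivAt_cos θ).const_mul a).add hsqrt
  convert hsum.log hne using 1
  have hs : √(R ^ 2 - a ^ 2 * sin θ ^ 2) ≠ 0 := (sqrt_pos.2 hD).ne'
  field_simp
  ring

section Integral

variable {a R σ : ℝ}

lemma integral_sin_div_sqrt (hR : 0 < R) (hRa : R < a) (hσ : 0 ≤ σ)
    (hσα : σ ≤ arcsin (R / a)) :
    IntervalIntegrable (fun θ => sin θ / √(R ^ 2 - a ^ 2 * sin θ ^ 2)) volume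
        σ (arcsin (R / a)) ∧
      ∫ θ in σ..arcsin (R / a), sin θ / √(R ^ 2 - a ^ 2 * sin θ ^ 2) =
        (log (a * cos σ + √(R ^ 2 - a ^ 2 * sin σ ^ 2)) - log √(a ^ 2 - R ^ 2)) / a := by
  have ha : 0 < a := hR.trans hRa
  set F := fun t => -a⁻¹ * log (a * cos t + √(R ^ 2 - a ^ 2 * sin t ^ 2))
  have hpos : ∀ t ∈ Icc σ (arcsin (R / a)), 0 < a * cos t + √(R ^ 2 - a ^ 2 * sin t ^ 2) :=
    fun t ht => add_pos_of_pos_of_nonneg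
      (mul_pos ha (cos_pos_of_le_arcsin ha hRa (hσ.trans ht.1) ht.2)) (sqrt_nonneg _)
  have hcont : ContinuousOn F (Icc σ (arcsin (R / a))) :=
    (ContinuousOn.log (by fun_prop) fun t ht => (hpos t ht).ne').const_smul (-a⁻¹)
  have hderiv : ∀ t ∈ Ioo σ (arcsin (R / a)),
      HasDerivAt F (sin t / √(R ^ 2 - a ^ 2 * sin t ^ 2)) t := by
    intro t ht
    have hD : 0 < R ^ 2 - a ^ 2 * sin t ^ 2 :=
      sub_pos.2 (sq_mul_sin_sq_lt_of_lt_arcsin ha (hσ.trans ht.1.le) ht.2)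
    exact ((hasDerivAt_log_mul_cos_add_sqrt hD (hpos t (Ioo_subset_Icc_self ht)).ne').const_mul
      (-a⁻¹)).congr_deriv (by field_simp)
  -- A nonnegative derivative is automatically integrable, even up to the grazing angle.
  have hint : IntervalIntegrable (fun θ => sin θ / √(R ^ 2 - a ^ 2 * sin θ ^ 2)) volume
      σ (arcsin (R / a)) :=
    (intervalIntegrable_iff_integrableOn_Ioc_of_le hσα).2 <|
      integrableOn_deriv_of_nonneg hcont hderiv fun t ht =>
        div_nonneg (sin_nonneg_of_le_arcsin (hσ.trans ht.1.le) ht.2.le) (sqrt_nonneg _)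
  refine ⟨hint, ?_⟩
  rw [integral_eq_sub_of_hasDerivAt_of_le hσα hcont hderiv hint]
  have hsin : a ^ 2 * sin (arcsin (R / a)) ^ 2 = R ^ 2 := by
    rw [sin_arcsin (by linarith [div_pos hR ha]) ((div_le_one ha).2 hRa.le)]
    field_simp
  simp only [F, hsin, sub_self, sqrt_zero, add_zero, mul_cos_arcsin_div ha]
  ring

lemma integral_inv_sqrt_le (hR : 0 < R) (hRa : R < a) (hσ : 0 < σ)
    (hσα : σ ≤ arcsin (R / a)) :
    ∫ θ in σ..arcsin (R / a), (√(R ^ 2 - a ^ 2 * sin θ ^ 2))⁻¹ ≤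
      (log (a * cos σ + √(R ^ 2 - a ^ 2 * sin σ ^ 2)) - log √(a ^ 2 - R ^ 2)) /
        (a * sin σ) := by
  have ha : 0 < a := hR.trans hRa
  have hα : arcsin (R / a) < π := (arcsin_div_lt_pi_div_two ha hRa).trans (by linarith [pi_pos])
  have hsσ : 0 < sin σ := sin_pos_of_pos_of_lt_pi hσ (hσα.trans_lt hα)
  obtain ⟨hint, hval⟩ := integral_sin_div_sqrt hR hRa hσ.le hσα
  have hle : ∀ θ ∈ Ioc σ (arcsin (R / a)),
      (√(R ^ 2 - a ^ 2 * sin θ ^ 2))⁻¹ ≤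
        sin θ / √(R ^ 2 - a ^ 2 * sin θ ^ 2) / sin σ := by
    intro θ hθ
    have hsin : sin σ ≤ sin θ :=
      sin_le_sin_of_le_of_le_pi_div_two (by linarith [pi_pos])
        (hθ.2.trans (arcsin_div_lt_pi_div_two ha hRa).le) hθ.1.le
    calc (√(R ^ 2 - a ^ 2 * sin θ ^ 2))⁻¹
        = sin σ / √(R ^ 2 - a ^ 2 * sin θ ^ 2) / sin σ := by field_simp
      _ ≤ sin θ / √(R ^ 2 - a ^ 2 * sin θ ^ 2) / sin σ := by gcongr
  calc ∫ θ in σ..arcsin (R / a), (√(R ^ 2 - a ^ 2 * sin θ ^ 2))⁻¹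
      = ∫ θ in Ioc σ (arcsin (R / a)), (√(R ^ 2 - a ^ 2 * sin θ ^ 2))⁻¹ :=
        integral_of_le hσα
    _ ≤ ∫ θ in Ioc σ (arcsin (R / a)), sin θ / √(R ^ 2 - a ^ 2 * sin θ ^ 2) / sin σ :=
        integral_mono_of_nonneg (Filter.Eventually.of_forall fun θ => inv_nonneg.2 (sqrt_nonneg _))
          (((intervalIntegrable_iff_integrableOn_Ioc_of_le hσα).1 hint).div_const _)
          (ae_restrict_of_forall_mem measurableSet_Ioc hle)
    _ = (∫ θ in σ..arcsin (R / a), sin θ / √(R ^ 2 - a ^ 2 * sin θ ^ 2)) / sin σ := by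
        rw [MeasureTheory.integral_div, integral_of_le hσα]
    _ = _ := by rw [hval, div_div]

end Integral

lemma two_mul_log_add_sub_log_sqrt {a R : ℝ} (hR : -a < R) (hRa : R < a) :
    2 * (log (a + R) - log √(a ^ 2 - R ^ 2)) = log (1 + 2 * R / (a - R)) := by
  have hp : 0 < a + R := by linarith
  have hm : 0 < a - R := by linarith
  rw [log_sqrt (by nlinarith), show a ^ 2 - R ^ 2 = (a + R) * (a - R) by ring,
    log_mul hp.ne' hm.ne', show 1 + 2 * R / (a - R) = (a + R) / (a - R) by field_simp; ring,
    log_div hp.ne' hm.ne']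
  ring

lemma integral_inv_sqrt_half_arcsin_le {a R : ℝ} (hR : 0 < R) (hRa : R < a) :
    ∫ θ in arcsin (R / a) / 2..arcsin (R / a), (√(R ^ 2 - a ^ 2 * sin θ ^ 2))⁻¹ ≤
      1 / R * log (1 + 2 * R / (a - R)) := by
  have ha : 0 < a := hR.trans hRa
  set α := arcsin (R / a) with hα_def
  have hα0 : 0 < α := arcsin_pos.2 (div_pos hR ha)
  have hαπ : α < π / 2 := arcsin_div_lt_pi_div_two ha hRa
  set σ := α / 2 with hσ_def
  set A := a * cos σ + √(R ^ 2 - a ^ 2 * sin σ ^ 2)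
  have hs : R ≤ 2 * (a * sin σ) := by
    have hsinα : a * sin α = R := by
      rw [hα_def, sin_arcsin (by linarith [div_pos hR ha]) ((div_le_one ha).2 hRa.le)]
      field_simp
    have h2σ : sin α = 2 * sin σ * cos σ := by rw [← sin_two_mul, hσ_def]; congr 1; ring
    have hsσ : 0 ≤ sin σ := sin_nonneg_of_nonneg_of_le_pi (by positivity) (by linarith [pi_pos])
    nlinarith [cos_le_one σ, mul_nonneg ha.le hsσ]
  have hbA : √(a ^ 2 - R ^ 2) ≤ A := by
    have hcos : cos α ≤ cos σ :=
      cos_le_cos_of_nonneg_of_le_pi (by positivity) (by linarith [pi_pos]) (by linarith)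
    have := mul_le_mul_of_nonneg_left hcos ha.le
    rw [hα_def, mul_cos_arcsin_div ha] at this
    linarith [sqrt_nonneg (R ^ 2 - a ^ 2 * sin σ ^ 2)]
  have hAR : A ≤ a + R := by
    have hsqrt : √(R ^ 2 - a ^ 2 * sin σ ^ 2) ≤ R := by
      rw [sqrt_le_left hR.le]; nlinarith [sq_nonneg (a * sin σ)]
    nlinarith [cos_le_one σ]
  have hb : 0 < √(a ^ 2 - R ^ 2) := sqrt_pos.2 (by nlinarith)
  calc ∫ θ in σ..α, (√(R ^ 2 - a ^ 2 * sin θ ^ 2))⁻¹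
      ≤ (log A - log √(a ^ 2 - R ^ 2)) / (a * sin σ) :=
        integral_inv_sqrt_le hR hRa (by positivity) (by linarith)
    _ ≤ (log A - log √(a ^ 2 - R ^ 2)) / (R / 2) :=
        div_le_div_of_nonneg_left (by linarith [log_le_log hb hbA]) (by positivity) (by linarith)
    _ ≤ (log (a + R) - log √(a ^ 2 - R ^ 2)) / (R / 2) := by gcongr; exact hb.trans_le hbA
    _ = 1 / R * log (1 + 2 * R / (a - R)) := by
        rw [← two_mul_log_add_sub_log_sqrt (by linarith) hRa]; field_simp

/-- **Lemma 5.4** (grazing-angle integral bound for a circle). Let `0 < R < a`,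
`x = (a,0)` and `α = arcsin(R/a)`. For every direction `u = (cos u_θ, sin u_θ)` with
`u_θ ∈ (0, α]` the set `{τ > 0 : |x − τu| = R}` is nonempty,
`x_b(x,u;R)·u = √(R² − a² sin² u_θ)`, and
`∫_{α/2}^{α} 1/(x_b(x,u;R)·u) du_θ ≤ (1/R) ln(1 + 2R/(a−R))`. -/
theorem circle_grazing_angle_integral (a R : ℝ) (hR : 0 < R) (hRa : R < a) :
    (∀ θ ∈ Set.Ioc (0 : ℝ) (Real.arcsin (R / a)),
        ({τ : ℝ | 0 < τ ∧ ‖vec2 a 0 - τ • vec2 (Real.cos θ) (Real.sin θ)‖ = R}).Nonempty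
        ∧ ⟪xbCir a R θ, vec2 (Real.cos θ) (Real.sin θ)⟫
            = Real.sqrt (R ^ 2 - a ^ 2 * Real.sin θ ^ 2))
    ∧ (∫ θ in (Real.arcsin (R / a) / 2)..(Real.arcsin (R / a)),
          (⟪xbCir a R θ, vec2 (Real.cos θ) (Real.sin θ)⟫)⁻¹)
        ≤ (1 / R) * Real.log (1 + 2 * R / (a - R)) := by
  have ha : 0 < a := hR.trans hRa
  have hcone : ∀ θ, 0 ≤ θ → θ ≤ arcsin (R / a) →
      0 < cos θ ∧ a ^ 2 * sin θ ^ 2 ≤ R ^ 2 := fun θ h0 hθ =>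
    ⟨cos_pos_of_le_arcsin ha hRa h0 hθ, sq_mul_sin_sq_le_of_le_arcsin ha h0 hθ⟩
  refine ⟨fun θ hθ => ?_, ?_⟩
  · obtain ⟨hcos, hsin⟩ := hcone θ hθ.1.le hθ.2
    rw [hittingSet_eq_pair hR.le hRa hcos hsin]
    exact ⟨insert_nonempty _ _, inner_xbCir_eq hR.le hRa hcos hsin⟩
  · have hα : 0 ≤ arcsin (R / a) := arcsin_nonneg.2 (div_pos hR ha).le
    rw [integral_congr fun θ hθ => ?_]
    · exact integral_inv_sqrt_half_arcsin_le hR hRa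
    rw [uIcc_of_le (by linarith)] at hθ
    obtain ⟨hcos, hsin⟩ := hcone θ (by linarith [hθ.1]) hθ.2
    simp only [inner_xbCir_eq hR.le hRa hcos hsin]

end
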